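/- arXiv:2103.02344 — 3 statements merged into one kernel-verified Lean document; each statement's English description precedes it below -/
import Mathlib

section
/- The function u(x,y,t) = a₀/(1 + 12 a₀ t) · x² y² − (2/3) ln(1 + 12 a₀ t), defined for a₀ ∈ ℝ and t such that 1 + 12 a₀ t > 0, satisfies the partial differential equation uₜ = det(D²u) − Δ²u, where det(D²u) = u_{xx} u_{yy} − u_{xy}² and Δ²u = u_{xxxx} + 2 u_{xxyy} + u_{yyyy}. -/
/-!
For fixed `t` the function is `c x² y² + const` with `c = a₀ / (1 + 12 a₀ t)`, so every spatial
slice is a quadratic polynomial: `u_xx u_yy - u_xy² = 4c²x²y² - 16c²x²y² = -12c²x²y²` and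
`Δ²u = 2 · 4c = 8c`. In time, `∂ₜ c = -12c²` and `∂ₜ ((2/3) log (1 + 12 a₀ t)) = 8c`.
-/

noncomputable section

/-- The explicit solution on the unit square. -/
def U (a₀ x y t : ℝ) : ℝ :=
  a₀ / (1 + 12 * a₀ * t) * x ^ 2 * y ^ 2 - (2 / 3) * Real.log (1 + 12 * a₀ * t)

section Quadratic

variable (A B : ℝ)

theorem deriv_quadratic : deriv (fun z : ℝ => A * z ^ 2 + B) = fun z => 2 * A * z := by
  funext z
  simp
  ring

theorem iteratedDeriv_two_quadratic :
    iteratedDeriv 2 (fun z : ℝ => A * z ^ 2 + B) = fun _ => 2 * A := by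
  rw [iteratedDeriv_succ, iteratedDeriv_one, deriv_quadratic]
  funext z
  simp

theorem iteratedDeriv_four_quadratic :
    iteratedDeriv 4 (fun z : ℝ => A * z ^ 2 + B) = 0 := by
  rw [iteratedDeriv_succ, iteratedDeriv_succ, iteratedDeriv_two_quadratic]
  simp only [deriv_const']
  rfl

end Quadratic

section Slices

variable (a₀ x y t : ℝ)

theorem U_eq_quadratic_in_x :
    (fun x' => U a₀ x' y t) = fun x' =>
      a₀ / (1 + 12 * a₀ * t) * y ^ 2 * x' ^ 2 + -(2 / 3 * Real.log (1 + 12 * a₀ * t)) := by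
  funext x'
  rw [U]
  ring

theorem U_eq_quadratic_in_y :
    (fun y' => U a₀ x y' t) = fun y' =>
      a₀ / (1 + 12 * a₀ * t) * x ^ 2 * y' ^ 2 + -(2 / 3 * Real.log (1 + 12 * a₀ * t)) := by
  funext y'
  rw [U, sub_eq_add_neg]

theorem deriv_y_U_eq_quadratic_in_x :
    (fun x' => deriv (fun y' => U a₀ x' y' t) y) = fun x' =>
      2 * a₀ / (1 + 12 * a₀ * t) * y * x' ^ 2 + 0 := by
  funext x'
  rw [U_eq_quadratic_in_y, deriv_quadratic]
  ring

theorem iteratedDeriv_two_y_U_eq_quadratic_in_x :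
    (fun x' => iteratedDeriv 2 (fun y' => U a₀ x' y' t) y) = fun x' =>
      2 * a₀ / (1 + 12 * a₀ * t) * x' ^ 2 + 0 := by
  funext x'
  rw [U_eq_quadratic_in_y, iteratedDeriv_two_quadratic]
  ring

theorem hasDerivAt_U_time (ht : 1 + 12 * a₀ * t ≠ 0) :
    HasDerivAt (fun s => U a₀ x y s)
      (-12 * (a₀ / (1 + 12 * a₀ * t)) ^ 2 * x ^ 2 * y ^ 2 - 8 * (a₀ / (1 + 12 * a₀ * t))) t := by
  have hw : HasDerivAt (fun s => 1 + 12 * a₀ * s) (12 * a₀) t := by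
    simpa using ((hasDerivAt_id t).const_mul (12 * a₀)).const_add 1
  refine HasDerivAt.congr_deriv (f := fun s => U a₀ x y s)
    (((((hasDerivAt_const t a₀).div hw ht).mul_const (x ^ 2)).mul_const (y ^ 2)).sub
      ((hw.log ht).const_mul (2 / 3))) ?_
  field_simp
  ring

end Slices

/-- `u(x,y,t) = a₀/(1+12a₀t) x²y² − (2/3)ln(1+12a₀t)` satisfies
`uₜ = det(D²u) − Δ²u` wherever `1 + 12a₀t > 0`. -/
theorem stmt0 (a₀ x y t : ℝ) (ht : 1 + 12 * a₀ * t > 0) :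
    deriv (fun s => U a₀ x y s) t =
      (iteratedDeriv 2 (fun x' => U a₀ x' y t) x *
        iteratedDeriv 2 (fun y' => U a₀ x y' t) y -
        (deriv (fun x' => deriv (fun y' => U a₀ x' y' t) y) x) ^ 2) -
      (iteratedDeriv 4 (fun x' => U a₀ x' y t) x +
        2 * iteratedDeriv 2 (fun x' => iteratedDeriv 2 (fun y' => U a₀ x' y' t) y) x +
        iteratedDeriv 4 (fun y' => U a₀ x y' t) y) := by
  rw [(hasDerivAt_U_time a₀ x y t ht.ne').deriv, U_eq_quadratic_in_x, U_eq_quadratic_in_y,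
    deriv_y_U_eq_quadratic_in_x, iteratedDeriv_two_y_U_eq_quadratic_in_x,
    iteratedDeriv_two_quadratic, iteratedDeriv_two_quadratic, iteratedDeriv_two_quadratic,
    iteratedDeriv_four_quadratic, iteratedDeriv_four_quadratic, deriv_quadratic]
  simp only [Pi.zero_apply]
  ring
end
end

section
/- Let a₀ < 0 and set T* = −1/(12 a₀) > 0. Then for u(x,y,t) = a₀/(1 + 12 a₀ t) · x² y² − (2/3) ln(1 + 12 a₀ t): (i) if (x,y) ∈ [0,1]² with x = 0 or y = 0, then u(x,y,t) → +∞ as t ↗ T*; (ii) if (x,y) ∈ [0,1]² with x ≠ 0 and y ≠ 0, then u(x,y,t) → −∞ as t ↗ T*. -/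
noncomputable section

/-!
With `ε = 1 + 12 a₀ t ↘ 0` as `t ↗ T*`, the solution is `a₀ x² y² / ε - (2/3) log ε`. When `x y = 0`
only `-(2/3) log ε → +∞` survives; otherwise the pole `a₀ x² y² / ε → -∞` wins, because
`ε log ε → 0`.
-/

open Filter Real Topology

lemma tendsto_one_add_mul_nhdsGT_zero {c : ℝ} (hc : c < 0) :
    Tendsto (fun t => 1 + c * t) (𝓝[<] (-1 / c)) (𝓝[>] 0) := by
  have hroot : 1 + c * (-1 / c) = 0 := by field_simp [hc.ne]; ring
  refine tendsto_nhdsWithin_of_tendsto_nhds_of_eventually_within _ ?_ ?_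
  · have hcont : Continuous fun t : ℝ => 1 + c * t := by fun_prop
    simpa only [hroot] using (hcont.tendsto (-1 / c)).mono_left nhdsWithin_le_nhds
  · filter_upwards [self_mem_nhdsWithin] with t (ht : t < -1 / c)
    have : c * (-1 / c) < c * t := mul_lt_mul_of_neg_left ht hc
    simp only [Set.mem_Ioi]
    linarith

lemma tendsto_div_sub_mul_log_atTop {c k : ℝ} (hc : 0 ≤ c) (hk : 0 < k) :
    Tendsto (fun ε => c / ε - k * log ε) (𝓝[>] 0) atTop := by
  have hlog : Tendsto (fun ε => -k * log ε) (𝓝[>] 0) atTop :=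
    tendsto_log_nhdsGT_zero.const_mul_atBot_of_neg (neg_neg_of_pos hk)
  refine tendsto_atTop_mono' _ ?_ hlog
  filter_upwards [self_mem_nhdsWithin] with ε (hε : 0 < ε)
  have : 0 ≤ c / ε := div_nonneg hc hε.le
  linarith

lemma tendsto_div_sub_mul_log_atBot {c : ℝ} (hc : c < 0) (k : ℝ) :
    Tendsto (fun ε => c / ε - k * log ε) (𝓝[>] 0) atBot := by
  have hε_log : Tendsto (fun ε => ε * log ε) (𝓝[>] 0) (𝓝 0) := by
    simpa only [rpow_one, mul_comm] using tendsto_log_mul_rpow_nhdsGT_zero one_pos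
  have hnum : Tendsto (fun ε => c - k * (ε * log ε)) (𝓝[>] 0) (𝓝 c) := by
    simpa using tendsto_const_nhds.sub (hε_log.const_mul k)
  -- `c / ε - k log ε = ε⁻¹ (c - k ε log ε)`, and `ε log ε → 0`
  refine (tendsto_inv_nhdsGT_zero.atTop_mul_neg hc hnum).congr' ?_
  filter_upwards [self_mem_nhdsWithin] with ε (hε : 0 < ε)
  field_simp

theorem stmt3_general (a₀ x y : ℝ) (ha : a₀ < 0) :
    (x = 0 ∨ y = 0 →
      Filter.Tendsto (fun t => U a₀ x y t) (nhdsWithin (-1 / (12 * a₀)) (Set.Iio (-1 / (12 * a₀))))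
        Filter.atTop) ∧
    (x ≠ 0 ∧ y ≠ 0 →
      Filter.Tendsto (fun t => U a₀ x y t) (nhdsWithin (-1 / (12 * a₀)) (Set.Iio (-1 / (12 * a₀))))
        Filter.atBot) := by
  have hε := tendsto_one_add_mul_nhdsGT_zero (c := 12 * a₀) (by linarith)
  have hU : (fun t => U a₀ x y t) =
      (fun ε => a₀ * (x * y) ^ 2 / ε - 2 / 3 * log ε) ∘ (fun t => 1 + 12 * a₀ * t) := by
    funext t
    simp only [U, Function.comp_apply]
    ring
  rw [hU]
  refine ⟨fun hxy => ?_, fun ⟨hx, hy⟩ => ?_⟩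
  · refine (tendsto_div_sub_mul_log_atTop ?_ (by norm_num)).comp hε
    rcases hxy with rfl | rfl <;> simp
  · have hxy : 0 < (x * y) ^ 2 := by positivity
    exact (tendsto_div_sub_mul_log_atBot (mul_neg_of_neg_of_pos ha hxy) _).comp hε

/-- For `a₀ < 0` and `T* = −1/(12a₀)`: the solution tends to `+∞` as `t ↗ T*` on the axes
`x = 0` or `y = 0` of `[0,1]²`, and to `−∞` elsewhere in `[0,1]²`. -/
theorem stmt3 (a₀ x y : ℝ) (ha : a₀ < 0)
    (hx : x ∈ Set.Icc (0:ℝ) 1) (hy : y ∈ Set.Icc (0:ℝ) 1) :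
    (x = 0 ∨ y = 0 →
      Filter.Tendsto (fun t => U a₀ x y t) (nhdsWithin (-1 / (12 * a₀)) (Set.Iio (-1 / (12 * a₀))))
        Filter.atTop) ∧
    (x ≠ 0 ∧ y ≠ 0 →
      Filter.Tendsto (fun t => U a₀ x y t) (nhdsWithin (-1 / (12 * a₀)) (Set.Iio (-1 / (12 * a₀))))
        Filter.atBot) :=
  stmt3_general a₀ x y ha
end
end

section
/- Let Ω ⊂ ℝ² be a bounded smooth domain and u ∈ H³(Ω) ∩ H²₀(Ω) with ∇u ∈ L^∞(Ω). Then ‖Δu‖⁴_{L⁴(Ω)} ≤ C ‖∇u‖_{L^∞(Ω)} ‖∇Δu‖_{L²(Ω)} ‖Δu‖²_{L⁴(Ω)}, and hence ‖Δu‖²_{L⁴(Ω)} ≤ C ‖∇u‖_{L^∞(Ω)} ‖∇Δu‖_{L²(Ω)}, for a universal constant C > 0. -/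
noncomputable section
open MeasureTheory Set

/-- Partial derivative in the first spatial variable. -/
def px (f : ℝ × ℝ → ℝ) (p : ℝ × ℝ) : ℝ := deriv (fun x => f (x, p.2)) p.1

/-- Partial derivative in the second spatial variable. -/
def py (f : ℝ × ℝ → ℝ) (p : ℝ × ℝ) : ℝ := deriv (fun y => f (p.1, y)) p.2

/-- The spatial Laplacian. -/
def lap (f : ℝ × ℝ → ℝ) (p : ℝ × ℝ) : ℝ := px (px f) p + py (py f) p


lemma px_eq_fderiv {f : ℝ × ℝ → ℝ} (hf : ContDiff ℝ (⊤ : ℕ∞) f) (p : ℝ × ℝ) :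
    px f p = fderiv ℝ f p ((1:ℝ), (0:ℝ)) := by
  have h0 : HasDerivAt (fun x : ℝ => (x, p.2)) ((1:ℝ), (0:ℝ)) p.1 :=
    (hasDerivAt_id p.1).prodMk (hasDerivAt_const _ _)
  have h := ((hf.differentiable (by simp)) p).hasFDerivAt.comp_hasDerivAt p.1 h0
  exact h.deriv

lemma py_eq_fderiv {f : ℝ × ℝ → ℝ} (hf : ContDiff ℝ (⊤ : ℕ∞) f) (p : ℝ × ℝ) :
    py f p = fderiv ℝ f p ((0:ℝ), (1:ℝ)) := by
  have h0 : HasDerivAt (fun y : ℝ => (p.1, y)) ((0:ℝ), (1:ℝ)) p.2 :=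
    (hasDerivAt_const _ _).prodMk (hasDerivAt_id p.2)
  have h := ((hf.differentiable (by simp)) p).hasFDerivAt.comp_hasDerivAt p.2 h0
  exact h.deriv

lemma px_hasDerivAt {f : ℝ × ℝ → ℝ} (hf : ContDiff ℝ (⊤ : ℕ∞) f) (p : ℝ × ℝ) :
    HasDerivAt (fun x => f (x, p.2)) (px f p) p.1 := by
  rw [px_eq_fderiv hf]
  exact ((hf.differentiable (by simp)) p).hasFDerivAt.comp_hasDerivAt p.1
    ((hasDerivAt_id p.1).prodMk (hasDerivAt_const _ _))

lemma py_hasDerivAt {f : ℝ × ℝ → ℝ} (hf : ContDiff ℝ (⊤ : ℕ∞) f) (p : ℝ × ℝ) :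
    HasDerivAt (fun y => f (p.1, y)) (py f p) p.2 := by
  rw [py_eq_fderiv hf]
  exact ((hf.differentiable (by simp)) p).hasFDerivAt.comp_hasDerivAt p.2
    ((hasDerivAt_const _ _).prodMk (hasDerivAt_id p.2))

lemma contDiff_px {f : ℝ × ℝ → ℝ} (hf : ContDiff ℝ (⊤ : ℕ∞) f) : ContDiff ℝ (⊤ : ℕ∞) (px f) := by
  have : px f = fun p => fderiv ℝ f p ((1:ℝ), (0:ℝ)) := funext fun p => px_eq_fderiv hf p
  rw [this]
  exact (hf.fderiv_right (by simp)).clm_apply contDiff_const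

lemma contDiff_py {f : ℝ × ℝ → ℝ} (hf : ContDiff ℝ (⊤ : ℕ∞) f) : ContDiff ℝ (⊤ : ℕ∞) (py f) := by
  have : py f = fun p => fderiv ℝ f p ((0:ℝ), (1:ℝ)) := funext fun p => py_eq_fderiv hf p
  rw [this]
  exact (hf.fderiv_right (by simp)).clm_apply contDiff_const

lemma contDiff_lap {f : ℝ × ℝ → ℝ} (hf : ContDiff ℝ (⊤ : ℕ∞) f) : ContDiff ℝ (⊤ : ℕ∞) (lap f) :=
  (contDiff_px (contDiff_px hf)).add (contDiff_py (contDiff_py hf))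

lemma oneD (U : Set ℝ) (hU : IsOpen U) (hb : Bornology.IsBounded U)
    (g : ℝ → ℝ) (hg : ContDiff ℝ (⊤ : ℕ∞) g) (h0 : ∀ x ∈ frontier U, g x = 0) :
    ∫ x in U, deriv g x = 0 := by
  classical
  set a : ℝ → ℝ := fun x => sSup (Uᶜ ∩ Iio x) with ha
  set b : ℝ → ℝ := fun x => sInf (Uᶜ ∩ Ioi x) with hbdef
  obtain ⟨c, d, hcd⟩ : ∃ c d, U ⊆ Icc c d := by
    rcases (Metric.isBounded_iff_subset_closedBall 0).1 hb with ⟨r, hr⟩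
    exact ⟨-r, r, fun x hx => by simpa [Real.closedBall_eq_Icc] using hr hx⟩
  have hne_lo : ∀ x ∈ U, (Uᶜ ∩ Iio x).Nonempty := by
    intro x hx
    refine ⟨c - 1, fun hc => ?_, ?_⟩
    · have := (hcd hc).1; linarith
    · have := (hcd hx).1; simp only [mem_Iio]; linarith
  have hne_hi : ∀ x ∈ U, (Uᶜ ∩ Ioi x).Nonempty := by
    intro x hx
    refine ⟨d + 1, fun hc => ?_, ?_⟩
    · have := (hcd hc).2; linarith
    · have := (hcd hx).2; simp only [mem_Ioi]; linarith
  have hbdd_lo : ∀ x : ℝ, BddAbove (Uᶜ ∩ Iio x) := fun x =>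
    ⟨x, fun t ht => le_of_lt ht.2⟩
  have hbdd_hi : ∀ x : ℝ, BddBelow (Uᶜ ∩ Ioi x) := fun x =>
    ⟨x, fun t ht => le_of_lt ht.2⟩
  have ha_lt : ∀ x ∈ U, a x < x := by
    intro x hx
    rcases Metric.isOpen_iff.1 hU x hx with ⟨ε, hε, hball⟩
    rw [Real.ball_eq_Ioo] at hball
    have : a x ≤ x - ε/2 := by
      apply csSup_le (hne_lo x hx)
      intro t ht
      by_contra hlt
      push_neg at hlt
      exact ht.1 (hball ⟨by linarith, by linarith [ht.2.out]⟩)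
    linarith
  have hb_gt : ∀ x ∈ U, x < b x := by
    intro x hx
    rcases Metric.isOpen_iff.1 hU x hx with ⟨ε, hε, hball⟩
    rw [Real.ball_eq_Ioo] at hball
    have : x + ε/2 ≤ b x := by
      apply le_csInf (hne_hi x hx)
      intro t ht
      by_contra hlt
      push_neg at hlt
      exact ht.1 (hball ⟨by linarith [ht.2.out], by linarith⟩)
    linarith
  have ha_notmem : ∀ x ∈ U, a x ∉ U := by
    intro x hx
    have h1 : a x ∈ closure (Uᶜ ∩ Iio x) := csSup_mem_closure (hne_lo x hx) (hbdd_lo x)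
    have h2 : a x ∈ closure (Uᶜ) := closure_mono inter_subset_left h1
    rwa [hU.isClosed_compl.closure_eq] at h2
  have hb_notmem : ∀ x ∈ U, b x ∉ U := by
    intro x hx
    have h1 : b x ∈ closure (Uᶜ ∩ Ioi x) := csInf_mem_closure (hne_hi x hx) (hbdd_hi x)
    have h2 : b x ∈ closure (Uᶜ) := closure_mono inter_subset_left h1
    rwa [hU.isClosed_compl.closure_eq] at h2
  have hIoo_lo : ∀ x ∈ U, Ioo (a x) x ⊆ U := by
    intro x hx t ht
    by_contra htU
    exact absurd (le_csSup (hbdd_lo x) ⟨htU, ht.2⟩) (not_le.2 ht.1)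
  have hIoo_hi : ∀ x ∈ U, Ioo x (b x) ⊆ U := by
    intro x hx t ht
    by_contra htU
    exact absurd (csInf_le (hbdd_hi x) ⟨htU, ht.1⟩) (not_le.2 ht.2)
  have hIoo : ∀ x ∈ U, Ioo (a x) (b x) ⊆ U := by
    intro x hx t ht
    rcases lt_trichotomy t x with h | h | h
    · exact hIoo_lo x hx ⟨ht.1, h⟩
    · rwa [h]
    · exact hIoo_hi x hx ⟨h, ht.2⟩
  have hmem : ∀ x ∈ U, x ∈ Ioo (a x) (b x) := fun x hx => ⟨ha_lt x hx, hb_gt x hx⟩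
  have ha_frontier : ∀ x ∈ U, a x ∈ frontier U := by
    intro x hx
    rw [hU.frontier_eq]
    refine ⟨?_, ha_notmem x hx⟩
    have h1 : a x ∈ closure (Ioo (a x) x) := by
      rw [closure_Ioo (ne_of_lt (ha_lt x hx))]
      exact ⟨le_refl _, le_of_lt (ha_lt x hx)⟩
    exact closure_mono (hIoo_lo x hx) h1
  have hb_frontier : ∀ x ∈ U, b x ∈ frontier U := by
    intro x hx
    rw [hU.frontier_eq]
    refine ⟨?_, hb_notmem x hx⟩
    have h1 : b x ∈ closure (Ioo x (b x)) := by
      rw [closure_Ioo (ne_of_lt (hb_gt x hx))]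
      exact ⟨le_of_lt (hb_gt x hx), le_refl _⟩
    exact closure_mono (hIoo_hi x hx) h1
  have hkey : ∀ x ∈ U, ∀ y ∈ U, (Ioo (a x) (b x) ∩ Ioo (a y) (b y)).Nonempty →
      a x = a y ∧ b x = b y := by
    rintro x hx y hy ⟨t, ht1, ht2⟩
    constructor
    · rcases lt_trichotomy (a x) (a y) with h | h | h
      · exact absurd (hIoo x hx ⟨h, lt_trans ht2.1 ht1.2⟩) (ha_notmem y hy)
      · exact h
      · exact absurd (hIoo y hy ⟨h, lt_trans ht1.1 ht2.2⟩) (ha_notmem x hx)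
    · rcases lt_trichotomy (b x) (b y) with h | h | h
      · exact absurd (hIoo y hy ⟨lt_trans ht2.1 ht1.2, h⟩) (hb_notmem x hx)
      · exact h
      · exact absurd (hIoo x hx ⟨lt_trans ht1.1 ht2.2, h⟩) (hb_notmem y hy)
  -- countable index set of components
  set I : Set (ℝ × ℝ) := (fun x => (a x, b x)) '' U with hI
  have hI_cd : ∀ q ∈ I, ∃ x ∈ U, q = (a x, b x) := by
    rintro q ⟨x, hx, rfl⟩; exact ⟨x, hx, rfl⟩
  have hdisj : I.PairwiseDisjoint (fun q : ℝ × ℝ => Ioo q.1 q.2) := by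
    rintro q hq q' hq' hne
    obtain ⟨x, hx, rfl⟩ := hI_cd q hq
    obtain ⟨y, hy, rfl⟩ := hI_cd q' hq'
    rw [Function.onFun]
    rw [Set.disjoint_iff_inter_eq_empty]
    by_contra hcon
    rcases hkey x hx y hy (nonempty_iff_ne_empty.2 hcon) with ⟨h1, h2⟩
    exact hne (by simp [h1, h2])
  have hIcount : I.Countable := by
    apply hdisj.countable_of_isOpen (fun q _ => isOpen_Ioo)
    rintro q hq
    obtain ⟨x, hx, rfl⟩ := hI_cd q hq
    exact ⟨x, hmem x hx⟩
  have := hIcount.to_subtype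
  have hunion : U = ⋃ q : I, Ioo (q : ℝ × ℝ).1 (q : ℝ × ℝ).2 := by
    ext t
    constructor
    · intro ht
      exact mem_iUnion.2 ⟨⟨(a t, b t), ⟨t, ht, rfl⟩⟩, hmem t ht⟩
    · intro ht
      rcases mem_iUnion.1 ht with ⟨⟨q, hq⟩, hmemq⟩
      obtain ⟨x, hx, rfl⟩ := hI_cd q hq
      exact hIoo x hx hmemq
  have hcont : Continuous (deriv g) := (contDiff_infty_iff_deriv.1 (hg.of_le (by simp))).2.continuous
  have hint : IntegrableOn (deriv g) U volume := by
    apply IntegrableOn.mono_set _ (subset_closure : U ⊆ closure U)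
    exact hcont.continuousOn.integrableOn_compact hb.isCompact_closure
  rw [hunion]
  rw [integral_iUnion (fun i => measurableSet_Ioo) ?disj (hunion ▸ hint)]
  case disj =>
    rintro ⟨q, hq⟩ ⟨q', hq'⟩ hne
    have : q ≠ q' := fun h => hne (Subtype.ext h)
    obtain ⟨x, hx, rfl⟩ := hI_cd q hq
    obtain ⟨y, hy, rfl⟩ := hI_cd q' hq'
    rw [Function.onFun, Set.disjoint_iff_inter_eq_empty]
    by_contra hcon
    rcases hkey x hx y hy (nonempty_iff_ne_empty.2 hcon) with ⟨h1, h2⟩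
    exact this (by simp [h1, h2])
  have hterm : ∀ q : I, ∫ t in Ioo (q : ℝ × ℝ).1 (q : ℝ × ℝ).2, deriv g t = 0 := by
    rintro ⟨q, hq⟩
    obtain ⟨x, hx, rfl⟩ := hI_cd q hq
    have hab : a x ≤ b x := le_of_lt (lt_trans (ha_lt x hx) (hb_gt x hx))
    rw [← integral_Ioc_eq_integral_Ioo, ← intervalIntegral.integral_of_le hab]
    rw [intervalIntegral.integral_deriv_eq_sub
      (fun t _ => (hg.differentiable (by simp)).differentiableAt)
      (hcont.intervalIntegrable _ _)]
    rw [h0 _ (hb_frontier x hx), h0 _ (ha_frontier x hx), sub_zero]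
  simp only [hterm, tsum_zero]

lemma integrableOn_of_bounded {Ω : Set (ℝ × ℝ)} (hb : Bornology.IsBounded Ω)
    {f : ℝ × ℝ → ℝ} (hf : Continuous f) : IntegrableOn f Ω volume :=
  IntegrableOn.mono_set
    (hf.continuousOn.integrableOn_compact hb.isCompact_closure) subset_closure

lemma intx (Ω : Set (ℝ × ℝ)) (hΩ : IsOpen Ω) (hb : Bornology.IsBounded Ω)
    (f : ℝ × ℝ → ℝ) (hf : ContDiff ℝ (⊤ : ℕ∞) f) (h0 : ∀ p ∈ frontier Ω, f p = 0) :
    ∫ p in Ω, px f p = 0 := by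
  obtain ⟨C, hC⟩ := isBounded_iff_forall_norm_le.1 hb
  have hmeas : MeasurableSet Ω := hΩ.measurableSet
  have hcont : Continuous (px f) := (contDiff_px hf).continuous
  have hint : IntegrableOn (px f) Ω volume := integrableOn_of_bounded hb hcont
  have hIND : Integrable (Ω.indicator (px f)) volume :=
    (integrable_indicator_iff hmeas).2 hint
  rw [← integral_indicator hmeas]
  rw [MeasureTheory.Measure.volume_eq_prod ℝ ℝ] at hIND ⊢
  rw [integral_prod_symm _ hIND]
  have hinner : ∀ y : ℝ, (∫ x, Ω.indicator (px f) (x, y)) = 0 := by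
    intro y
    set U : Set ℝ := {x | (x, y) ∈ Ω} with hUdef
    have hUopen : IsOpen U := hΩ.preimage (continuous_id.prodMk continuous_const)
    have hUb : Bornology.IsBounded U := by
      rw [isBounded_iff_forall_norm_le]
      exact ⟨C, fun x hx => le_trans (norm_fst_le ((x : ℝ), y)) (hC _ hx)⟩
    have hindeq : (fun x => Ω.indicator (px f) (x, y)) =
        U.indicator (fun x => px f (x, y)) := by
      funext x
      by_cases hx : (x, y) ∈ Ω
      · rw [Set.indicator_of_mem hx, Set.indicator_of_mem (show x ∈ U from hx)]
      · rw [Set.indicator_of_notMem hx, Set.indicator_of_notMem (show x ∉ U from hx)]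
    rw [hindeq, integral_indicator hUopen.measurableSet]
    have : (fun x => px f (x, y)) = fun x => deriv (fun x' => f (x', y)) x := rfl
    rw [this]
    apply oneD U hUopen hUb _ (hf.comp (contDiff_id.prodMk contDiff_const))
    intro x hx
    apply h0
    rw [hΩ.frontier_eq]
    rw [hUopen.frontier_eq] at hx
    refine ⟨?_, hx.2⟩
    have := (continuous_id.prodMk (continuous_const (y := y))).closure_preimage_subset Ω
    exact this hx.1
  simp only [hinner, integral_zero]

lemma inty (Ω : Set (ℝ × ℝ)) (hΩ : IsOpen Ω) (hb : Bornology.IsBounded Ω)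
    (f : ℝ × ℝ → ℝ) (hf : ContDiff ℝ (⊤ : ℕ∞) f) (h0 : ∀ p ∈ frontier Ω, f p = 0) :
    ∫ p in Ω, py f p = 0 := by
  obtain ⟨C, hC⟩ := isBounded_iff_forall_norm_le.1 hb
  have hmeas : MeasurableSet Ω := hΩ.measurableSet
  have hcont : Continuous (py f) := (contDiff_py hf).continuous
  have hint : IntegrableOn (py f) Ω volume := integrableOn_of_bounded hb hcont
  have hIND : Integrable (Ω.indicator (py f)) volume :=
    (integrable_indicator_iff hmeas).2 hint
  rw [← integral_indicator hmeas]
  rw [MeasureTheory.Measure.volume_eq_prod ℝ ℝ] at hIND ⊢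
  rw [integral_prod _ hIND]
  have hinner : ∀ x : ℝ, (∫ y, Ω.indicator (py f) (x, y)) = 0 := by
    intro x
    set U : Set ℝ := {y | (x, y) ∈ Ω} with hUdef
    have hUopen : IsOpen U := hΩ.preimage (continuous_const.prodMk continuous_id)
    have hUb : Bornology.IsBounded U := by
      rw [isBounded_iff_forall_norm_le]
      exact ⟨C, fun y hy => le_trans (norm_snd_le (x, (y : ℝ))) (hC _ hy)⟩
    have hindeq : (fun y => Ω.indicator (py f) (x, y)) =
        U.indicator (fun y => py f (x, y)) := by
      funext y
      by_cases hy : (x, y) ∈ Ω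
      · rw [Set.indicator_of_mem hy, Set.indicator_of_mem (show y ∈ U from hy)]
      · rw [Set.indicator_of_notMem hy, Set.indicator_of_notMem (show y ∉ U from hy)]
    rw [hindeq, integral_indicator hUopen.measurableSet]
    have : (fun y => py f (x, y)) = fun y => deriv (fun y' => f (x, y')) y := rfl
    rw [this]
    apply oneD U hUopen hUb _ (hf.comp (contDiff_const.prodMk contDiff_id))
    intro y hy
    apply h0
    rw [hΩ.frontier_eq]
    rw [hUopen.frontier_eq] at hy
    refine ⟨?_, hy.2⟩
    have hc2 : Continuous (fun y' : ℝ => ((x, y') : ℝ × ℝ)) := continuous_const.prodMk continuous_id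
    exact hc2.closure_preimage_subset Ω hy.1
  simp only [hinner, integral_zero]

/-- For `u ∈ H³ ∩ H²₀(Ω)` with `‖∇u‖_{L^∞(Ω)} ≤ M`:
`‖Δu‖⁴_{L⁴} ≤ C M ‖∇Δu‖_{L²} ‖Δu‖²_{L⁴}`, hence `‖Δu‖²_{L⁴} ≤ C M ‖∇Δu‖_{L²}`,
for a universal constant `C > 0`. -/
theorem stmt18 :
    ∃ C : ℝ, C > 0 ∧
      ∀ (Ω : Set (ℝ × ℝ)), IsOpen Ω → Bornology.IsBounded Ω →
      ∀ (u : ℝ × ℝ → ℝ), ContDiff ℝ (⊤ : ℕ∞) u →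
        (∀ p ∈ frontier Ω, u p = 0 ∧ px u p = 0 ∧ py u p = 0) →
        ∀ (M : ℝ), (∀ p ∈ Ω, ‖(px u p, py u p)‖ ≤ M) →
          (∫ p in Ω, |lap u p| ^ 4) ≤
            C * M * Real.sqrt (∫ p in Ω, ((px (lap u) p) ^ 2 + (py (lap u) p) ^ 2)) *
              Real.sqrt (∫ p in Ω, |lap u p| ^ 4) ∧
          (∫ p in Ω, |lap u p| ^ 4) ^ ((1 : ℝ) / 2) ≤
            C * M * Real.sqrt (∫ p in Ω, ((px (lap u) p) ^ 2 + (py (lap u) p) ^ 2)) := by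
  refine ⟨6, by norm_num, ?_⟩
  intro Ω hΩ hb u hu hbc M hM
  rcases Set.eq_empty_or_nonempty Ω with rfl | hne
  · simp [Real.zero_rpow (by norm_num : (1:ℝ)/2 ≠ 0)]
  have hM0 : 0 ≤ M := by
    obtain ⟨p, hp⟩ := hne
    exact le_trans (norm_nonneg _) (hM p hp)
  have hmeas : MeasurableSet Ω := hΩ.measurableSet
  set w : ℝ × ℝ → ℝ := lap u with hwdef
  have hw : ContDiff ℝ (⊤ : ℕ∞) w := contDiff_lap hu
  have hpxu : ContDiff ℝ (⊤ : ℕ∞) (px u) := contDiff_px hu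
  have hpyu : ContDiff ℝ (⊤ : ℕ∞) (py u) := contDiff_py hu
  have hpxw : ContDiff ℝ (⊤ : ℕ∞) (px w) := contDiff_px hw
  have hpyw : ContDiff ℝ (⊤ : ℕ∞) (py w) := contDiff_py hw
  -- abbreviations
  set X : ℝ := ∫ p in Ω, w p ^ 4 with hXdef
  set Y : ℝ := ∫ p in Ω, ((px w p) ^ 2 + (py w p) ^ 2) with hYdef
  have habs : (∫ p in Ω, |w p| ^ 4) = X := by
    apply setIntegral_congr_fun hmeas
    intro p _
    show |w p| ^ 4 = w p ^ 4
    rw [pow_abs, abs_of_nonneg (by positivity : (0:ℝ) ≤ w p ^ 4)]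
  rw [habs]
  have hX0 : 0 ≤ X := setIntegral_nonneg hmeas fun p _ => by positivity
  have hY0 : 0 ≤ Y := setIntegral_nonneg hmeas fun p _ => by positivity
  -- divergence identity, pointwise
  have hF1 : ContDiff ℝ (⊤ : ℕ∞) (fun q => w q ^ 3 * px u q) := (hw.pow 3).mul hpxu
  have hF2 : ContDiff ℝ (⊤ : ℕ∞) (fun q => w q ^ 3 * py u q) := (hw.pow 3).mul hpyu
  have hdiv : ∀ p : ℝ × ℝ,
      px (fun q => w q ^ 3 * px u q) p + py (fun q => w q ^ 3 * py u q) p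
      = w p ^ 4 + 3 * w p ^ 2 * (px w p * px u p + py w p * py u p) := by
    intro p
    have h1 : deriv (fun x => w (x, p.2) ^ 3 * px u (x, p.2)) p.1 = _ :=
      (((px_hasDerivAt hw p).pow 3).mul (px_hasDerivAt hpxu p)).deriv
    have h2 : deriv (fun y => w (p.1, y) ^ 3 * py u (p.1, y)) p.2 = _ :=
      (((py_hasDerivAt hw p).pow 3).mul (py_hasDerivAt hpyu p)).deriv
    have h3 : w p = px (px u) p + py (py u) p := rfl
    show deriv (fun x => w (x, p.2) ^ 3 * px u (x, p.2)) p.1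
      + deriv (fun y => w (p.1, y) ^ 3 * py u (p.1, y)) p.2 = _
    rw [h1, h2]
    simp only [Prod.mk.eta, Pi.pow_apply]
    rw [h3]
    push_cast
    ring
  -- integrate the divergence identity
  have hzero : (∫ p in Ω, (px (fun q => w q ^ 3 * px u q) p
      + py (fun q => w q ^ 3 * py u q) p)) = 0 := by
    rw [integral_add
      (integrableOn_of_bounded hb (contDiff_px hF1).continuous)
      (integrableOn_of_bounded hb (contDiff_py hF2).continuous)]
    rw [intx Ω hΩ hb _ hF1 (fun p hp => by rw [(hbc p hp).2.1, mul_zero]),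
      inty Ω hΩ hb _ hF2 (fun p hp => by rw [(hbc p hp).2.2, mul_zero]), add_zero]
  have hIw4 : IntegrableOn (fun p => w p ^ 4) Ω volume :=
    integrableOn_of_bounded hb (hw.pow 4).continuous
  have hIG : IntegrableOn (fun p => w p ^ 2 * (px w p * px u p + py w p * py u p)) Ω volume :=
    integrableOn_of_bounded hb
      ((hw.pow 2).mul ((hpxw.mul hpxu).add (hpyw.mul hpyu))).continuous
  have hsplit : X + 3 * (∫ p in Ω, w p ^ 2 * (px w p * px u p + py w p * py u p)) = 0 := by
    have h := hzero
    rw [setIntegral_congr_fun hmeas (fun p (_ : p ∈ Ω) => hdiv p)] at h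
    rw [setIntegral_congr_fun hmeas (fun p (_ : p ∈ Ω) => (by ring :
      w p ^ 4 + 3 * w p ^ 2 * (px w p * px u p + py w p * py u p)
      = w p ^ 4 + 3 * (w p ^ 2 * (px w p * px u p + py w p * py u p))))] at h
    rw [integral_add hIw4 (hIG.const_mul 3), integral_const_mul] at h
    linarith
  -- Cauchy-Schwarz / Hölder step
  haveI hfin : IsFiniteMeasure (volume.restrict Ω) := by
    constructor
    rw [Measure.restrict_apply_univ]
    exact lt_of_le_of_lt (measure_mono subset_closure) hb.isCompact_closure.measure_lt_top
  set W : ℝ := ∫ p in Ω, (|px w p| + |py w p|) ^ 2 with hWdef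
  have hCS : (∫ p in Ω, w p ^ 2 * (|px w p| + |py w p|)) ≤
      Real.sqrt X * Real.sqrt W := by
    have hf : Continuous fun p => w p ^ 2 := (hw.pow 2).continuous
    have hg : Continuous fun p => |px w p| + |py w p| :=
      (hpxw.continuous.abs.add hpyw.continuous.abs)
    obtain ⟨C1, hC1⟩ := hb.isCompact_closure.exists_bound_of_continuousOn hf.continuousOn
    obtain ⟨C2, hC2⟩ := hb.isCompact_closure.exists_bound_of_continuousOn hg.continuousOn
    have hmf : MemLp (fun p => w p ^ 2) (ENNReal.ofReal 2) (volume.restrict Ω) := by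
      apply MemLp.of_bound hf.aestronglyMeasurable C1
      exact ae_restrict_of_forall_mem hmeas fun p hp => hC1 p (subset_closure hp)
    have hmg : MemLp (fun p => |px w p| + |py w p|) (ENNReal.ofReal 2) (volume.restrict Ω) := by
      apply MemLp.of_bound hg.aestronglyMeasurable C2
      exact ae_restrict_of_forall_mem hmeas fun p hp => hC2 p (subset_closure hp)
    have h := integral_mul_le_Lp_mul_Lq_of_nonneg (μ := volume.restrict Ω)
      (Real.holderConjugate_iff.mpr ⟨by norm_num, by norm_num⟩ : Real.HolderConjugate 2 2)
      (Filter.Eventually.of_forall fun p => by positivity)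
      (Filter.Eventually.of_forall fun p => by positivity) hmf hmg
    rw [Real.sqrt_eq_rpow, Real.sqrt_eq_rpow]
    calc (∫ p in Ω, w p ^ 2 * (|px w p| + |py w p|)) ≤
        (∫ p in Ω, (w p ^ 2) ^ (2:ℝ)) ^ ((1:ℝ)/2) *
          (∫ p in Ω, (|px w p| + |py w p|) ^ (2:ℝ)) ^ ((1:ℝ)/2) := h
      _ = X ^ ((1:ℝ)/2) * W ^ ((1:ℝ)/2) := by
          rw [hXdef, hWdef]
          congr 2
          · apply setIntegral_congr_fun hmeas
            intro p _
            show (w p ^ 2) ^ (2:ℝ) = w p ^ 4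
            rw [show (2:ℝ) = ((2:ℕ):ℝ) by norm_num, Real.rpow_natCast]
            ring
          · apply setIntegral_congr_fun hmeas
            intro p _
            show (|px w p| + |py w p|) ^ (2:ℝ) = (|px w p| + |py w p|) ^ 2
            rw [show (2:ℝ) = ((2:ℕ):ℝ) by norm_num, Real.rpow_natCast]
  have hW2 : W ≤ 2 * Y := by
    rw [hWdef, hYdef]
    have hstep : (∫ p in Ω, (|px w p| + |py w p|) ^ 2)
        ≤ ∫ p in Ω, 2 * (px w p ^ 2 + py w p ^ 2) := by
      apply setIntegral_mono_on
      · exact integrableOn_of_bounded hb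
          ((hpxw.continuous.abs.add hpyw.continuous.abs).pow 2)
      · exact (integrableOn_of_bounded hb
          ((hpxw.continuous.pow 2).add (hpyw.continuous.pow 2))).const_mul 2
      · exact hmeas
      · intro p _
        nlinarith [sq_nonneg (|px w p| - |py w p|), sq_abs (px w p), sq_abs (py w p)]
    calc (∫ p in Ω, (|px w p| + |py w p|) ^ 2)
        ≤ ∫ p in Ω, 2 * (px w p ^ 2 + py w p ^ 2) := hstep
      _ = 2 * ∫ p in Ω, (px w p ^ 2 + py w p ^ 2) := integral_const_mul 2 _
  -- pointwise bound and conclusion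
  have hZbound : X ≤ 3 * (M * (∫ p in Ω, w p ^ 2 * (|px w p| + |py w p|))) := by
    have hmono : (∫ p in Ω, -(w p ^ 2 * (px w p * px u p + py w p * py u p)))
        ≤ ∫ p in Ω, M * (w p ^ 2 * (|px w p| + |py w p|)) := by
      apply setIntegral_mono_on hIG.neg
      · exact (integrableOn_of_bounded hb
          ((hw.pow 2).continuous.mul (hpxw.continuous.abs.add hpyw.continuous.abs))).const_mul M
      · exact hmeas
      · intro p hp
        simp only [Pi.neg_apply]
        have hxu : |px u p| ≤ M :=
          le_trans (le_of_eq (Real.norm_eq_abs (px u p)).symm)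
            (le_trans (norm_fst_le (px u p, py u p)) (hM p hp))
        have hyu : |py u p| ≤ M :=
          le_trans (le_of_eq (Real.norm_eq_abs (py u p)).symm)
            (le_trans (norm_snd_le (px u p, py u p)) (hM p hp))
        have h1 : -(px w p * px u p) ≤ |px w p| * M := by
          calc -(px w p * px u p) ≤ |px w p * px u p| := neg_le_abs _
            _ = |px w p| * |px u p| := abs_mul _ _
            _ ≤ |px w p| * M := mul_le_mul_of_nonneg_left hxu (abs_nonneg _)
        have h2 : -(py w p * py u p) ≤ |py w p| * M := by
          calc -(py w p * py u p) ≤ |py w p * py u p| := neg_le_abs _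
            _ = |py w p| * |py u p| := abs_mul _ _
            _ ≤ |py w p| * M := mul_le_mul_of_nonneg_left hyu (abs_nonneg _)
        nlinarith [sq_nonneg (w p), mul_le_mul_of_nonneg_left (add_le_add h1 h2) (sq_nonneg (w p))]
    rw [integral_neg] at hmono
    rw [integral_const_mul] at hmono
    linarith
  have hsqrt2 : Real.sqrt W ≤ 2 * Real.sqrt Y := by
    calc Real.sqrt W ≤ Real.sqrt (2 * Y) := Real.sqrt_le_sqrt hW2
      _ = Real.sqrt 2 * Real.sqrt Y := Real.sqrt_mul (by norm_num) _
      _ ≤ 2 * Real.sqrt Y := by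
          have h2 : Real.sqrt 2 ≤ 2 := by
            nlinarith [Real.sq_sqrt (show (0:ℝ) ≤ 2 by norm_num), Real.sqrt_nonneg 2]
          exact mul_le_mul_of_nonneg_right h2 (Real.sqrt_nonneg _)
  have hCS0 : (0:ℝ) ≤ ∫ p in Ω, w p ^ 2 * (|px w p| + |py w p|) :=
    setIntegral_nonneg hmeas fun p _ => by positivity
  have hfirst : X ≤ 6 * M * Real.sqrt Y * Real.sqrt X := by
    calc X ≤ 3 * (M * (∫ p in Ω, w p ^ 2 * (|px w p| + |py w p|))) := hZbound
      _ ≤ 3 * (M * (Real.sqrt X * Real.sqrt W)) := by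
          have := mul_le_mul_of_nonneg_left hCS hM0
          linarith
      _ ≤ 3 * (M * (Real.sqrt X * (2 * Real.sqrt Y))) := by
          have := mul_le_mul_of_nonneg_left
            (mul_le_mul_of_nonneg_left hsqrt2 (Real.sqrt_nonneg X)) hM0
          linarith
      _ = 6 * M * Real.sqrt Y * Real.sqrt X := by ring
  refine ⟨hfirst, ?_⟩
  have hsecond : Real.sqrt X ≤ 6 * M * Real.sqrt Y := by
    by_cases h : Real.sqrt X = 0
    · rw [h]; positivity
    · have hpos : 0 < Real.sqrt X := lt_of_le_of_ne (Real.sqrt_nonneg X) (Ne.symm h)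
      have hmul : Real.sqrt X * Real.sqrt X ≤ (6 * M * Real.sqrt Y) * Real.sqrt X := by
        rw [Real.mul_self_sqrt hX0]
        linarith
      exact le_of_mul_le_mul_right hmul hpos
  rw [← Real.sqrt_eq_rpow]
  exact hsecond
end
end
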